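/- arXiv:1603.04399 — 2 statements merged into one kernel-verified Lean document; each statement's English description precedes it below -/
import Mathlib

section
/- For every integer n ≥ 2, the sum S1 + S2 + S3 + S4 + S5 equals 2n·C(2n+4,5), where S1 = Σ_{k1=1}^{2n} Σ_{l1=1}^{k1} Σ_{k2=k1}^{2n} Σ_{l2=k1}^{k2} [2(l2−k1) + (k2−l2)(k2−l2+1)], S2 = Σ (over same index ranges) 1, S3 = Σ (same ranges) (l2−k1)(2k2−k1−l2+1)/2, S4 = Σ (same ranges) (k1−1), and S5 = Σ_{k1=1}^{2n} Σ_{l1=1}^{k1} Σ_{k3=k1}^{2n} Σ_{l3=k1}^{k3} (2n−k3)(k1−1). -/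
open Finset

private def P1 (M c2 a b : ℤ) : ℤ :=
  10*b + 12*b^2 + 2*b^3 - 10*a - 18*a*b + 18*a^2 + 6*a^2*b - 8*a^3 + 24*c2 + 18*c2*b
    - 6*c2*b^2 - 54*c2*a - 24*c2*a*b + 30*c2*a^2 + 12*c2^2 + 12*c2^2*b - 12*c2^2*a
    - 12*M - 12*M*b + 24*M*a + 12*M*a*b - 12*M*a^2

private def P2 (M a b : ℤ) : ℤ :=
  24*b + 40*b^2 + 18*b^3 + 2*b^4 - 52*a*b - 54*a*b^2 - 12*a*b^3 + 36*a^2*b + 18*a^2*b^2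
    - 8*a^3*b - 12*M - 18*M*b - 6*M*b^2 + 30*M*a + 30*M*a*b + 6*M*a*b^2 - 24*M*a^2
    - 12*M*a^2*b + 6*M*a^3

private def P2m (M a : ℤ) : ℤ :=
  12*M - 22*M*a + 12*M*a^2 - 2*M*a^3 + 22*M^2 - 24*M^2*a + 6*M^2*a^2 + 12*M^3 - 6*M^3*a + 2*M^4

private def P4 (M b : ℤ) : ℤ :=
  24*M*b - 20*M*b^2 - 20*M*b^3 + 20*M*b^4 - 4*M*b^5 + 70*M^2*b + 5*M^2*b^2 - 50*M^2*b^3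
    + 15*M^2*b^4 + 50*M^3*b + 30*M^3*b^2 - 20*M^3*b^3 + 10*M^4*b + 10*M^4*b^2

private lemma L1 (M c2 : ℤ) (k1 K : ℕ) (h : k1 ≤ K) :
    ∑ l2 ∈ Icc k1 K, (6 * (2*(2*((l2:ℤ)-(k1:ℤ)) + (c2-(l2:ℤ))*(c2-(l2:ℤ)+1)) + 2
        + ((l2:ℤ)-(k1:ℤ))*(2*c2-(k1:ℤ)-(l2:ℤ)+1) + 2*((k1:ℤ)-1) + 2*(M-c2)*((k1:ℤ)-1)))
    = P1 M c2 (k1:ℤ) (K:ℤ) := by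
  induction K, h using Nat.le_induction with
  | base => rw [Finset.Icc_self, Finset.sum_singleton]; unfold P1; ring
  | succ K hK ih =>
      rw [Finset.sum_Icc_succ_top (by omega), ih]
      unfold P1; push_cast; ring

private lemma L2 (M : ℤ) (k1 K : ℕ) (h : k1 ≤ K) :
    ∑ k2 ∈ Icc k1 K, P1 M (k2:ℤ) (k1:ℤ) (k2:ℤ) = P2 M (k1:ℤ) (K:ℤ) := by
  induction K, h using Nat.le_induction with
  | base => rw [Finset.Icc_self, Finset.sum_singleton]; unfold P1 P2; ring
  | succ K hK ih =>
      rw [Finset.sum_Icc_succ_top (by omega), ih]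
      unfold P1 P2; push_cast; ring

private lemma L4 (M : ℤ) (K : ℕ) :
    10 * ∑ k1 ∈ Icc 1 K, ((k1:ℤ) * P2m M (k1:ℤ)) = P4 M (K:ℤ) := by
  induction K with
  | zero => simp [P4]
  | succ K ih =>
      rw [Finset.sum_Icc_succ_top (by omega), mul_add, ih]
      unfold P2m P4; push_cast; ring

theorem sum_of_five_subcases (n : ℕ) (hn : 2 ≤ n) :
    (∑ k1 ∈ Icc 1 (2*n), ∑ _l1 ∈ Icc 1 k1, ∑ k2 ∈ Icc k1 (2*n), ∑ l2 ∈ Icc k1 k2,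
        (2*(l2 - k1) + (k2 - l2)*(k2 - l2 + 1))) +
    (∑ k1 ∈ Icc 1 (2*n), ∑ _l1 ∈ Icc 1 k1, ∑ k2 ∈ Icc k1 (2*n), ∑ _l2 ∈ Icc k1 k2, 1) +
    (∑ k1 ∈ Icc 1 (2*n), ∑ _l1 ∈ Icc 1 k1, ∑ k2 ∈ Icc k1 (2*n), ∑ l2 ∈ Icc k1 k2,
        ((l2 - k1)*(2*k2 - k1 - l2 + 1)) / 2) +
    (∑ k1 ∈ Icc 1 (2*n), ∑ _l1 ∈ Icc 1 k1, ∑ _k2 ∈ Icc k1 (2*n), ∑ _l2 ∈ Icc k1 _k2,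
        (k1 - 1)) +
    (∑ k1 ∈ Icc 1 (2*n), ∑ _l1 ∈ Icc 1 k1, ∑ k3 ∈ Icc k1 (2*n), ∑ _l3 ∈ Icc k1 k3,
        (2*n - k3)*(k1 - 1))
    = 2*n * Nat.choose (2*n + 4) 5 := by
  set m := 2*n with hm
  -- the integer-valued combined sum
  set T : ℤ := ∑ k1 ∈ Icc 1 m, ∑ _l1 ∈ Icc 1 k1, ∑ k2 ∈ Icc k1 m, ∑ l2 ∈ Icc k1 k2,
      (6 * (2*(2*((l2:ℤ)-(k1:ℤ)) + ((k2:ℤ)-(l2:ℤ))*((k2:ℤ)-(l2:ℤ)+1)) + 2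
        + ((l2:ℤ)-(k1:ℤ))*(2*(k2:ℤ)-(k1:ℤ)-(l2:ℤ)+1) + 2*((k1:ℤ)-1)
        + 2*((m:ℤ)-(k2:ℤ))*((k1:ℤ)-1))) with hT
  have hTclosed : 10 * T = P4 (m:ℤ) (m:ℤ) := by
    rw [hT]
    rw [← L4 (m:ℤ) m]
    congr 1
    apply Finset.sum_congr rfl
    intro k1 hk1
    simp only [Finset.mem_Icc] at hk1
    have h1 : ∑ k2 ∈ Icc k1 m, ∑ l2 ∈ Icc k1 k2,
        (6 * (2*(2*((l2:ℤ)-(k1:ℤ)) + ((k2:ℤ)-(l2:ℤ))*((k2:ℤ)-(l2:ℤ)+1)) + 2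
          + ((l2:ℤ)-(k1:ℤ))*(2*(k2:ℤ)-(k1:ℤ)-(l2:ℤ)+1) + 2*((k1:ℤ)-1)
          + 2*((m:ℤ)-(k2:ℤ))*((k1:ℤ)-1))) = P2m (m:ℤ) (k1:ℤ) := by
      have : ∑ k2 ∈ Icc k1 m, ∑ l2 ∈ Icc k1 k2,
          (6 * (2*(2*((l2:ℤ)-(k1:ℤ)) + ((k2:ℤ)-(l2:ℤ))*((k2:ℤ)-(l2:ℤ)+1)) + 2
            + ((l2:ℤ)-(k1:ℤ))*(2*(k2:ℤ)-(k1:ℤ)-(l2:ℤ)+1) + 2*((k1:ℤ)-1)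
            + 2*((m:ℤ)-(k2:ℤ))*((k1:ℤ)-1)))
          = ∑ k2 ∈ Icc k1 m, P1 (m:ℤ) (k2:ℤ) (k1:ℤ) (k2:ℤ) := by
        apply Finset.sum_congr rfl
        intro k2 hk2
        simp only [Finset.mem_Icc] at hk2
        exact L1 (m:ℤ) (k2:ℤ) k1 k2 hk2.1
      rw [this, L2 (m:ℤ) k1 m hk1.2]
      unfold P2 P2m; ring
    rw [Finset.sum_const, Nat.card_Icc]
    simp only [Nat.add_sub_cancel, nsmul_eq_mul]
    rw [h1]
  -- relate T to the natural number sums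
  have hnat : T = ((∑ k1 ∈ Icc 1 m, ∑ _l1 ∈ Icc 1 k1, ∑ k2 ∈ Icc k1 m, ∑ l2 ∈ Icc k1 k2,
        (12*(2*(l2 - k1) + (k2 - l2)*(k2 - l2 + 1)) + 12
        + 6*((l2 - k1)*(2*k2 - k1 - l2 + 1)) + 12*(k1 - 1)
        + 12*((m - k2)*(k1 - 1))) : ℕ) : ℤ) := by
    rw [hT]
    push_cast
    apply Finset.sum_congr rfl; intro k1 hk1
    apply Finset.sum_congr rfl; intro _l1 _
    apply Finset.sum_congr rfl; intro k2 hk2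
    apply Finset.sum_congr rfl; intro l2 hl2
    simp only [Finset.mem_Icc] at hk1 hk2 hl2
    obtain ⟨ha, hb⟩ := hk1
    obtain ⟨hc, hd⟩ := hk2
    obtain ⟨he, hf⟩ := hl2
    have haux1 : k1 ≤ 2*k2 := by omega
    have haux2 : l2 ≤ 2*k2 - k1 := by omega
    simp only [Nat.cast_sub ha, Nat.cast_sub he, Nat.cast_sub hf, Nat.cast_sub hd,
      Nat.cast_sub haux2, Nat.cast_sub haux1]
    push_cast
    ring
  -- replace the even product by twice the divided term
  have hprod : (∑ k1 ∈ Icc 1 m, ∑ _l1 ∈ Icc 1 k1, ∑ k2 ∈ Icc k1 m, ∑ l2 ∈ Icc k1 k2,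
        ((l2 - k1)*(2*k2 - k1 - l2 + 1)))
      = 2 * (∑ k1 ∈ Icc 1 m, ∑ _l1 ∈ Icc 1 k1, ∑ k2 ∈ Icc k1 m, ∑ l2 ∈ Icc k1 k2,
        (((l2 - k1)*(2*k2 - k1 - l2 + 1)) / 2)) := by
    simp only [Finset.mul_sum]
    apply Finset.sum_congr rfl; intro k1 hk1
    apply Finset.sum_congr rfl; intro _l1 _
    apply Finset.sum_congr rfl; intro k2 hk2
    apply Finset.sum_congr rfl; intro l2 hl2
    simp only [Finset.mem_Icc] at hk1 hk2 hl2
    have hdvd : 2 ∣ (l2 - k1)*(2*k2 - k1 - l2 + 1) := by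
      rcases Nat.even_or_odd (l2 - k1) with hpar | hpar
      · exact Dvd.dvd.mul_right hpar.two_dvd _
      · obtain ⟨c, hcc⟩ := hpar
        have : 2 ∣ (2*k2 - k1 - l2 + 1) := by omega
        exact Dvd.dvd.mul_left this _
    exact (Nat.mul_div_cancel' hdvd).symm
  -- split the nat sum
  have hsplit : (∑ k1 ∈ Icc 1 m, ∑ _l1 ∈ Icc 1 k1, ∑ k2 ∈ Icc k1 m, ∑ l2 ∈ Icc k1 k2,
        (12*(2*(l2 - k1) + (k2 - l2)*(k2 - l2 + 1)) + 12
        + 6*((l2 - k1)*(2*k2 - k1 - l2 + 1)) + 12*(k1 - 1)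
        + 12*((m - k2)*(k1 - 1))))
      = 12 * (∑ k1 ∈ Icc 1 m, ∑ _l1 ∈ Icc 1 k1, ∑ k2 ∈ Icc k1 m, ∑ l2 ∈ Icc k1 k2,
        (2*(l2 - k1) + (k2 - l2)*(k2 - l2 + 1)))
      + 12 * (∑ k1 ∈ Icc 1 m, ∑ _l1 ∈ Icc 1 k1, ∑ k2 ∈ Icc k1 m, ∑ _l2 ∈ Icc k1 k2, 1)
      + 6 * (∑ k1 ∈ Icc 1 m, ∑ _l1 ∈ Icc 1 k1, ∑ k2 ∈ Icc k1 m, ∑ l2 ∈ Icc k1 k2,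
          ((l2 - k1)*(2*k2 - k1 - l2 + 1)))
      + 12 * (∑ k1 ∈ Icc 1 m, ∑ _l1 ∈ Icc 1 k1, ∑ _k2 ∈ Icc k1 m, ∑ _l2 ∈ Icc k1 _k2, (k1 - 1))
      + 12 * (∑ k1 ∈ Icc 1 m, ∑ _l1 ∈ Icc 1 k1, ∑ k3 ∈ Icc k1 m, ∑ _l3 ∈ Icc k1 k3,
          (m - k3)*(k1 - 1)) := by
    simp only [Finset.sum_add_distrib, Finset.mul_sum, mul_add, mul_one]
  -- the key cast equation
  set A := ∑ k1 ∈ Icc 1 m, ∑ _l1 ∈ Icc 1 k1, ∑ k2 ∈ Icc k1 m, ∑ l2 ∈ Icc k1 k2,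
      (2*(l2 - k1) + (k2 - l2)*(k2 - l2 + 1)) with hA
  set B := ∑ k1 ∈ Icc 1 m, ∑ _l1 ∈ Icc 1 k1, ∑ k2 ∈ Icc k1 m, ∑ _l2 ∈ Icc k1 k2, 1 with hB
  set C := ∑ k1 ∈ Icc 1 m, ∑ _l1 ∈ Icc 1 k1, ∑ k2 ∈ Icc k1 m, ∑ l2 ∈ Icc k1 k2,
      (((l2 - k1)*(2*k2 - k1 - l2 + 1)) / 2) with hC
  set D := ∑ k1 ∈ Icc 1 m, ∑ _l1 ∈ Icc 1 k1, ∑ _k2 ∈ Icc k1 m, ∑ _l2 ∈ Icc k1 _k2, (k1 - 1)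
    with hD
  set E := ∑ k1 ∈ Icc 1 m, ∑ _l1 ∈ Icc 1 k1, ∑ k3 ∈ Icc k1 m, ∑ _l3 ∈ Icc k1 k3,
      ((m - k3)*(k1 - 1)) with hE
  have hN : T = ((12*A + 12*B + 12*C + 12*D + 12*E : ℕ) : ℤ) := by
    rw [hnat, hsplit, hprod]
    push_cast
    ring
  -- descFactorial computation
  have hch : (120:ℕ) * Nat.choose (m+4) 5 = (m+4)*(m+3)*(m+2)*(m+1)*m := by
    have h2 : Nat.descFactorial (m+4) 5 = (m+4)*(m+3)*(m+2)*(m+1)*m := by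
      simp only [Nat.descFactorial_succ, Nat.descFactorial_zero, mul_one]
      rw [show m+4-4 = m from by omega, show m+4-3 = m+1 from by omega,
        show m+4-2 = m+2 from by omega, show m+4-1 = m+3 from by omega,
        show m+4-0 = m+4 from rfl]
      ring
    have h := Nat.descFactorial_eq_factorial_mul_choose (m+4) 5
    rw [h2, show Nat.factorial 5 = 120 from rfl] at h
    exact h.symm
  have hP4 : P4 (m:ℤ) (m:ℤ) = (m:ℤ) * (((m+4)*(m+3)*(m+2)*(m+1)*m : ℕ) : ℤ) := by
    unfold P4; push_cast; ring
  have hkey : (120:ℕ) * (A + B + C + D + E) = 120 * (m * Nat.choose (m+4) 5) := by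
    have hz : ((120 * (A + B + C + D + E) : ℕ) : ℤ)
        = ((120 * (m * Nat.choose (m+4) 5) : ℕ) : ℤ) := by
      have e1 : ((120 * (A + B + C + D + E) : ℕ) : ℤ) = 10 * T := by
        rw [hN]; push_cast; ring
      rw [e1, hTclosed, hP4]
      push_cast [← hch]
      ring
    exact_mod_cast hz
  exact Nat.eq_of_mul_eq_mul_left (by norm_num) hkey
end

section
/- For every integer n ≥ 2, the quadruple sum Σ_{k1=1}^{2n} Σ_{l1=1}^{k1} Σ_{k2=k1}^{2n} Σ_{l2=k1}^{k2} [2(l2−k1) + (k2−l2)(k2−l2+1) + 1 + (l2−k1)(2k2−k1−l2+1)/2 + (k1−1) + (2n−k2)(k1−1)] = 2n·C(2n+4,5). -/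
open Finset

private lemma layerA (b i N : ℚ) (m : ℕ) :
    ∑ a ∈ range m, (1 + 2*i*N - i^2 + b - b*i + b^2 + 3/2*(a:ℚ) - (a:ℚ)*b + 1/2*(a:ℚ)^2)
      = 1/3*(m:ℚ) + 1/2*(m:ℚ)^2 + 1/6*(m:ℚ)^3 + 2*i*(m:ℚ)*N - i^2*(m:ℚ) + 3/2*b*(m:ℚ)
        - 1/2*b*(m:ℚ)^2 - b*i*(m:ℚ) + b^2*(m:ℚ) := by
  induction m with
  | zero => simp
  | succ m ih =>
    rw [Finset.sum_range_succ, ih]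
    push_cast
    ring

private lemma layerB (i N : ℚ) (M : ℕ) :
    ∑ b ∈ range M, (1 + 2*i*N - i^2 + 17/6*(b:ℚ) - (b:ℚ)*i + 2*(b:ℚ)*i*N - (b:ℚ)*i^2
        + 5/2*(b:ℚ)^2 - (b:ℚ)^2*i + 2/3*(b:ℚ)^3)
      = 1/3*(M:ℚ)^2 + 1/2*(M:ℚ)^3 + 1/6*(M:ℚ)^4 + 1/3*i*(M:ℚ) + i*(M:ℚ)*N + i*(M:ℚ)^2*N
        - 1/3*i*(M:ℚ)^3 - 1/2*i^2*(M:ℚ) - 1/2*i^2*(M:ℚ)^2 := by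
  induction M with
  | zero => simp
  | succ M ih =>
    rw [Finset.sum_range_succ, ih]
    push_cast
    ring

private lemma layerC (N : ℚ) (K : ℕ) :
    ∑ i ∈ range K, (4/3*N^2 + 4*N^3 + 8/3*N^4 - 2/3*(i:ℚ)*N - 8/3*(i:ℚ)*N^2 + 8/3*(i:ℚ)*N^4
        + 1/3*(i:ℚ)^2*N - 2*(i:ℚ)^2*N^2 - 4*(i:ℚ)^2*N^3 + 2/3*(i:ℚ)^3*N + 2*(i:ℚ)^3*N^2
        - 1/3*(i:ℚ)^4*N)
      = 2/5*(K:ℚ)*N + 7/3*(K:ℚ)*N^2 + 10/3*(K:ℚ)*N^3 + 4/3*(K:ℚ)*N^4 - 1/3*(K:ℚ)^2*N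
        + 1/6*(K:ℚ)^2*N^2 + 2*(K:ℚ)^2*N^3 + 4/3*(K:ℚ)^2*N^4 - 1/3*(K:ℚ)^3*N
        - 5/3*(K:ℚ)^3*N^2 - 4/3*(K:ℚ)^3*N^3 + 1/3*(K:ℚ)^4*N + 1/2*(K:ℚ)^4*N^2
        - 1/15*(K:ℚ)^5*N := by
  induction K with
  | zero => simp
  | succ K ih =>
    rw [Finset.sum_range_succ, ih]
    push_cast
    ring

private lemma inner_eval (n k1 : ℕ) (h1 : 1 ≤ k1) (h2 : k1 ≤ 2*n) :
    ((∑ k2 ∈ Icc k1 (2*n), ∑ l2 ∈ Icc k1 k2,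
        (2*(l2 - k1) + (k2 - l2)*(k2 - l2 + 1) + 1 +
          ((l2 - k1)*(2*k2 - k1 - l2 + 1)) / 2 + (k1 - 1) + (2*n - k2)*(k1 - 1)) : ℕ) : ℚ)
    = 2*(n:ℚ) + 22/3*(n:ℚ)^2 + 8*(n:ℚ)^3 + 8/3*(n:ℚ)^4 - 11/3*(k1:ℚ)*(n:ℚ)
      - 8*(k1:ℚ)*(n:ℚ)^2 - 4*(k1:ℚ)*(n:ℚ)^3 + 2*(k1:ℚ)^2*(n:ℚ) + 2*(k1:ℚ)^2*(n:ℚ)^2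
      - 1/3*(k1:ℚ)^3*(n:ℚ) := by
  rw [← Finset.Ico_add_one_right_eq_Icc, Finset.sum_Ico_eq_sum_range, Nat.cast_sum]
  have hb : ∀ b ∈ range (2*n+1-k1),
      ((∑ l2 ∈ Icc k1 (k1+b),
          (2*(l2 - k1) + ((k1+b) - l2)*((k1+b) - l2 + 1) + 1 +
            ((l2 - k1)*(2*(k1+b) - k1 - l2 + 1)) / 2 + (k1 - 1) + (2*n - (k1+b))*(k1 - 1)) : ℕ) : ℚ)
      = (1 + 2*((k1:ℚ)-1)*(n:ℚ) - ((k1:ℚ)-1)^2 + 17/6*(b:ℚ) - (b:ℚ)*((k1:ℚ)-1)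
          + 2*(b:ℚ)*((k1:ℚ)-1)*(n:ℚ) - (b:ℚ)*((k1:ℚ)-1)^2 + 5/2*(b:ℚ)^2
          - (b:ℚ)^2*((k1:ℚ)-1) + 2/3*(b:ℚ)^3) := by
    intro b hbm
    rw [mem_range] at hbm
    rw [← Finset.Ico_add_one_right_eq_Icc, Finset.sum_Ico_eq_sum_range,
        show k1 + b + 1 - k1 = b + 1 from by omega, Nat.cast_sum]
    have ha : ∀ a ∈ range (b+1),
        ((2*((k1+a) - k1) + ((k1+b) - (k1+a))*((k1+b) - (k1+a) + 1) + 1 +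
            (((k1+a) - k1)*(2*(k1+b) - k1 - (k1+a) + 1)) / 2 + (k1 - 1)
            + (2*n - (k1+b))*(k1 - 1) : ℕ) : ℚ)
        = (1 + 2*((k1:ℚ)-1)*(n:ℚ) - ((k1:ℚ)-1)^2 + (b:ℚ) - (b:ℚ)*((k1:ℚ)-1) + (b:ℚ)^2
            + 3/2*(a:ℚ) - (a:ℚ)*(b:ℚ) + 1/2*(a:ℚ)^2) := by
      intro a haa
      rw [mem_range] at haa
      have e1 : k1 + a - k1 = a := by omega
      have e2 : k1 + b - (k1 + a) = b - a := by omega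
      have e3 : 2*(k1+b) - k1 - (k1+a) + 1 = 2*b - a + 1 := by omega
      rw [e1, e2, e3]
      have hdvd : 2 ∣ a * (2*b - a + 1) := by
        rcases Nat.even_or_odd a with h | h
        · exact Dvd.dvd.mul_right h.two_dvd _
        · obtain ⟨c, hc⟩ := h
          exact Dvd.dvd.mul_left (by omega : 2 ∣ 2*b - a + 1) _
      have c3 : (((a * (2*b - a + 1)) / 2 : ℕ) : ℚ) = (a:ℚ) * (2*(b:ℚ) - (a:ℚ) + 1) / 2 := by
        rw [Nat.cast_div hdvd (by norm_num), Nat.cast_mul, Nat.cast_add,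
          Nat.cast_sub (by omega : a ≤ 2*b)]
        push_cast
        ring
      push_cast [c3, Nat.cast_sub (show a ≤ b by omega), Nat.cast_sub h1,
        Nat.cast_sub (show k1 + b ≤ 2*n by omega)]
      ring
    rw [Finset.sum_congr rfl ha, layerA (b:ℚ) ((k1:ℚ)-1) (n:ℚ) (b+1)]
    push_cast
    ring
  rw [Finset.sum_congr rfl hb, layerB ((k1:ℚ)-1) (n:ℚ) (2*n+1-k1),
    Nat.cast_sub (show k1 ≤ 2*n+1 by omega)]
  push_cast
  ring

theorem combined_quadruple_sum (n : ℕ) (hn : 2 ≤ n) :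
    ∑ k1 ∈ Icc 1 (2*n), ∑ _l1 ∈ Icc 1 k1, ∑ k2 ∈ Icc k1 (2*n), ∑ l2 ∈ Icc k1 k2,
        (2*(l2 - k1) + (k2 - l2)*(k2 - l2 + 1) + 1 +
          ((l2 - k1)*(2*k2 - k1 - l2 + 1)) / 2 + (k1 - 1) + (2*n - k2)*(k1 - 1))
    = 2*n * Nat.choose (2*n + 4) 5 := by
  have key : ((∑ k1 ∈ Icc 1 (2*n), ∑ _l1 ∈ Icc 1 k1, ∑ k2 ∈ Icc k1 (2*n), ∑ l2 ∈ Icc k1 k2,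
        (2*(l2 - k1) + (k2 - l2)*(k2 - l2 + 1) + 1 +
          ((l2 - k1)*(2*k2 - k1 - l2 + 1)) / 2 + (k1 - 1) + (2*n - k2)*(k1 - 1)) : ℕ) : ℚ)
      = 2*(n:ℚ) * ((Nat.choose (2*n + 4) 5 : ℕ) : ℚ) := by
    rw [Nat.cast_sum]
    have h1 : ∀ k1 ∈ Icc 1 (2*n),
        ((∑ _l1 ∈ Icc 1 k1, ∑ k2 ∈ Icc k1 (2*n), ∑ l2 ∈ Icc k1 k2,
            (2*(l2 - k1) + (k2 - l2)*(k2 - l2 + 1) + 1 +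
              ((l2 - k1)*(2*k2 - k1 - l2 + 1)) / 2 + (k1 - 1) + (2*n - k2)*(k1 - 1)) : ℕ) : ℚ)
        = (k1:ℚ) * (2*(n:ℚ) + 22/3*(n:ℚ)^2 + 8*(n:ℚ)^3 + 8/3*(n:ℚ)^4 - 11/3*(k1:ℚ)*(n:ℚ)
            - 8*(k1:ℚ)*(n:ℚ)^2 - 4*(k1:ℚ)*(n:ℚ)^3 + 2*(k1:ℚ)^2*(n:ℚ) + 2*(k1:ℚ)^2*(n:ℚ)^2
            - 1/3*(k1:ℚ)^3*(n:ℚ)) := by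
      intro k1 hk1
      rw [mem_Icc] at hk1
      rw [Finset.sum_const, Nat.card_Icc, smul_eq_mul, Nat.cast_mul,
        inner_eval n k1 hk1.1 hk1.2]
      norm_num
    rw [Finset.sum_congr rfl h1, ← Finset.Ico_add_one_right_eq_Icc, Finset.sum_Ico_eq_sum_range,
      show 2*n+1-1 = 2*n from rfl]
    have h2 : ∀ i ∈ range (2*n),
        (((1+i : ℕ)):ℚ) * (2*(n:ℚ) + 22/3*(n:ℚ)^2 + 8*(n:ℚ)^3 + 8/3*(n:ℚ)^4
            - 11/3*((1+i:ℕ):ℚ)*(n:ℚ) - 8*((1+i:ℕ):ℚ)*(n:ℚ)^2 - 4*((1+i:ℕ):ℚ)*(n:ℚ)^3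
            + 2*((1+i:ℕ):ℚ)^2*(n:ℚ) + 2*((1+i:ℕ):ℚ)^2*(n:ℚ)^2 - 1/3*((1+i:ℕ):ℚ)^3*(n:ℚ))
        = (4/3*(n:ℚ)^2 + 4*(n:ℚ)^3 + 8/3*(n:ℚ)^4 - 2/3*(i:ℚ)*(n:ℚ) - 8/3*(i:ℚ)*(n:ℚ)^2
            + 8/3*(i:ℚ)*(n:ℚ)^4 + 1/3*(i:ℚ)^2*(n:ℚ) - 2*(i:ℚ)^2*(n:ℚ)^2 - 4*(i:ℚ)^2*(n:ℚ)^3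
            + 2/3*(i:ℚ)^3*(n:ℚ) + 2*(i:ℚ)^3*(n:ℚ)^2 - 1/3*(i:ℚ)^4*(n:ℚ)) := by
      intro i _
      push_cast
      ring
    rw [Finset.sum_congr rfl h2, layerC (n:ℚ) (2*n)]
    have h5 : (2*n+4).choose 5 * 120 = (2*n)*(2*n+1)*(2*n+2)*(2*n+3)*(2*n+4) := by
      have hfac : (120:ℕ) = Nat.factorial 5 := by decide
      rw [Nat.choose_eq_descFactorial_div_factorial, hfac,
        Nat.div_mul_cancel (Nat.factorial_dvd_descFactorial _ _)]
      rw [Nat.descFactorial_succ, Nat.descFactorial_succ, Nat.descFactorial_succ,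
        Nat.descFactorial_succ, Nat.descFactorial_succ, Nat.descFactorial_zero]
      rw [show 2*n+4-4 = 2*n from by omega, show 2*n+4-3 = 2*n+1 from by omega,
        show 2*n+4-2 = 2*n+2 from by omega, show 2*n+4-1 = 2*n+3 from by omega,
        show 2*n+4-0 = 2*n+4 from by omega]
      ring
    have hch : (((2*n+4).choose 5 : ℕ) : ℚ) * 120
        = (2*(n:ℚ))*(2*(n:ℚ)+1)*(2*(n:ℚ)+2)*(2*(n:ℚ)+3)*(2*(n:ℚ)+4) := by
      exact_mod_cast congrArg (fun x : ℕ => (x:ℚ)) h5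
    push_cast
    push_cast at hch
    linear_combination (-(2*(n:ℚ))/120) * hch
  exact_mod_cast key
end
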